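/- Let γ > 0, let A ∈ ℝ^{m×n} be a matrix with |A_{ij}| ≤ γ for all entries, let x ∈ [-1,1]^n, let w_1, …, w_m ≥ 0 be nonnegative weights, and let k be a positive integer. Then there exists a linear subspace U ⊆ ℝ^n with dim(U) ≥ (1 − 1/k)·n such that for all y ∈ U one has ∑_{i=1}^m w_i·⟨A_i^{∘2} ∘ x, y⟩² ≤ k·γ²·∑_{i=1}^m w_i·∑_{j=1}^n A_{ij}² y_j². -/

import Mathlib

/-!
Put `D j = ∑ i, w i * A i j ^ 2` and rescale `z j = √(D j) * y j`. The right-hand side becomes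
`k γ² ‖z‖²` and the left-hand side becomes `⟪T z, z⟫` for the positive operator
`T = ∑ i, w i • |u i⟩⟨u i|` with `u i j = A i j ^ 2 * x j / √(D j)`. Its trace
`∑ j, (∑ i, w i * A i j ^ 4 * x j ^ 2) / D j` is at most `n γ²`, so at most `n / k` eigenvalues
of `T` exceed `k γ²`. The orthogonal complement of their eigenvectors, pulled back along the
rescaling, is the required subspace.
-/

open Finset Module
open scoped RealInnerProductSpace

namespace LinearMap.IsPositive

variable {E : Type*} [NormedAddCommGroup E] [InnerProductSpace ℝ E] [FiniteDimensional ℝ E]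
  {T : E →ₗ[ℝ] E}

theorem inner_map_self_eq_sum_eigenvalues (hT : T.IsPositive) (z : E) :
    ⟪T z, z⟫ = ∑ l, hT.isSymmetric.eigenvalues rfl l *
      ⟪hT.isSymmetric.eigenvectorBasis rfl l, z⟫ ^ 2 := by
  rw [← (hT.isSymmetric.eigenvectorBasis rfl).sum_inner_mul_inner]
  refine sum_congr rfl fun l _ => ?_
  rw [real_inner_comm, ← hT.isSymmetric, hT.isSymmetric.apply_eigenvectorBasis,
    real_inner_smul_left, real_inner_comm z]
  simp only [RCLike.ofReal_real_eq_id, id_eq]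
  ring

/-- `W` is the orthogonal complement of the eigenvectors whose eigenvalue exceeds `c`;
there are at most `tr T / c` of them. -/
theorem exists_submodule_inner_map_self_le (hT : T.IsPositive) {c : ℝ} (hc : 0 ≤ c) :
    ∃ W : Submodule ℝ E, ((finrank ℝ E : ℝ) - finrank ℝ W) * c ≤ T.trace ℝ E ∧
      ∀ z ∈ W, ⟪T z, z⟫ ≤ c * ‖z‖ ^ 2 := by
  classical
  set b := hT.isSymmetric.eigenvectorBasis rfl
  set μ := hT.isSymmetric.eigenvalues rfl
  set large := univ.filter fun l => c < μ l
  set K := Submodule.span ℝ ((large.image b : Finset E) : Set E)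
  refine ⟨Kᗮ, ?_, fun z hz => ?_⟩
  · have hK : finrank ℝ K ≤ #large :=
      (finrank_span_finset_le_card (large.image b)).trans card_image_le
    have hcodim : (finrank ℝ E : ℝ) - finrank ℝ Kᗮ ≤ #large := by
      have hsplit : (finrank ℝ K : ℝ) + finrank ℝ Kᗮ = finrank ℝ E := by
        exact_mod_cast K.finrank_add_finrank_orthogonal
      linarith [(Nat.cast_le (α := ℝ)).mpr hK]
    have hcard : (#large : ℝ) * c ≤ ∑ l ∈ large, μ l := by
      simpa using card_nsmul_le_sum large μ c fun l hl => (mem_filter.mp hl).2.le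
    have hsum : ∑ l ∈ large, μ l ≤ T.trace ℝ E := by
      rw [hT.isSymmetric.trace_eq_sum_eigenvalues rfl]
      exact sum_le_sum_of_subset_of_nonneg (subset_univ _)
        fun l _ _ => hT.nonneg_eigenvalues rfl l
    calc ((finrank ℝ E : ℝ) - finrank ℝ Kᗮ) * c ≤ #large * c := by gcongr
      _ ≤ T.trace ℝ E := hcard.trans hsum
  · have horth : ∀ l ∈ large, ⟪b l, z⟫ = 0 := fun l hl =>
      Submodule.inner_right_of_mem_orthogonal
        (Submodule.subset_span (by simpa using ⟨l, hl, rfl⟩)) hz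
    rw [hT.inner_map_self_eq_sum_eigenvalues, ← b.sum_sq_inner_right, mul_sum]
    change ∑ l, μ l * ⟪b l, z⟫ ^ 2 ≤ ∑ l, c * ⟪b l, z⟫ ^ 2
    refine sum_le_sum fun l _ => ?_
    by_cases hl : l ∈ large
    · simp [horth l hl]
    · exact mul_le_mul_of_nonneg_right (not_lt.mp fun h => hl (by simpa [large] using h))
        (sq_nonneg _)

end LinearMap.IsPositive

open InnerProductSpace in
theorem exists_submodule_sum_mul_inner_sq_le {E ι : Type*} [NormedAddCommGroup E]
    [InnerProductSpace ℝ E] [FiniteDimensional ℝ E] [Fintype ι] (w : ι → ℝ) (hw : ∀ i, 0 ≤ w i)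
    (v : ι → E) {c : ℝ} (hc : 0 ≤ c) :
    ∃ W : Submodule ℝ E, ((finrank ℝ E : ℝ) - finrank ℝ W) * c ≤ ∑ i, w i * ‖v i‖ ^ 2 ∧
      ∀ z ∈ W, ∑ i, w i * ⟪v i, z⟫ ^ 2 ≤ c * ‖z‖ ^ 2 := by
  set T : E →ₗ[ℝ] E := ∑ i, w i • (rankOne ℝ (v i) (v i)).toLinearMap
  have hT : T.IsPositive := LinearMap.isPositive_sum _ fun i _ =>
    ((ContinuousLinearMap.isPositive_toLinearMap_iff _).mpr
      (isPositive_rankOne_self (v i))).smul_of_nonneg (hw i)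
  have htrace : T.trace ℝ E = ∑ i, w i * ‖v i‖ ^ 2 := by
    simp [T, trace_rankOne]
  have hquad : ∀ z, ⟪T z, z⟫ = ∑ i, w i * ⟪v i, z⟫ ^ 2 := fun z => by
    simp [T, sum_inner, real_inner_smul_left, sq]
  obtain ⟨W, hdim, hW⟩ := hT.exists_submodule_inner_map_self_le hc
  exact ⟨W, htrace ▸ hdim, fun z hz => hquad z ▸ hW z hz⟩

theorem Submodule.finrank_add_finrank_le_finrank_comap_add {K V V' : Type*} [DivisionRing K]
    [AddCommGroup V] [Module K V] [AddCommGroup V'] [Module K V'] [FiniteDimensional K V]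
    [FiniteDimensional K V'] (f : V →ₗ[K] V') (p : Submodule K V') :
    finrank K V + finrank K p ≤ finrank K (p.comap f) + finrank K V' := by
  have hker : p.comap f = LinearMap.ker (p.mkQ ∘ₗ f) := by
    rw [LinearMap.ker_comp, Submodule.ker_mkQ]
  have hrange := Submodule.finrank_le (LinearMap.range (p.mkQ ∘ₗ f))
  rw [← (p.mkQ ∘ₗ f).finrank_range_add_finrank_ker, ← hker, ← p.finrank_quotient_add_finrank]
  omega

section DiagonalRescaling

variable {ι κ : Type*} [Fintype ι] [Fintype κ] {w : ι → ℝ} {a d : ι → κ → ℝ} {c : ℝ}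
  {s : κ → ℝ}

theorem sum_mul_sum_div_sq_le (hw : ∀ i, 0 ≤ w i) (hc : 0 ≤ c)
    (had : ∀ i j, a i j ^ 2 ≤ c * d i j) (hs : ∀ j, s j ^ 2 = ∑ i, w i * d i j) :
    ∑ i, w i * ∑ j, (a i j / s j) ^ 2 ≤ Fintype.card κ * c := by
  have hcol : ∀ j, (∑ i, w i * a i j ^ 2) / s j ^ 2 ≤ c := fun j =>
    calc (∑ i, w i * a i j ^ 2) / s j ^ 2 ≤ c * s j ^ 2 / s j ^ 2 := by
          gcongr
          rw [hs, mul_sum]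
          exact sum_le_sum fun i _ => by nlinarith [hw i, had i j]
      _ ≤ c := by
          rw [mul_div_assoc]
          exact mul_le_of_le_one_right hc (div_self_le_one _)
  calc ∑ i, w i * ∑ j, (a i j / s j) ^ 2 = ∑ j, (∑ i, w i * a i j ^ 2) / s j ^ 2 := by
        simp only [div_pow, mul_sum, sum_div, mul_div_assoc]
        exact sum_comm
    _ ≤ ∑ _j : κ, c := sum_le_sum fun j _ => hcol j
    _ = Fintype.card κ * c := by simp

/-- Where `s j = 0`, every row with `w i ≠ 0` has `a i j = 0`, so the junk value `a i j / 0 = 0`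
does no harm. -/
theorem mul_sum_div_mul_sq (hw : ∀ i, 0 ≤ w i) (hc : 0 < c)
    (had : ∀ i j, a i j ^ 2 ≤ c * d i j) (hs : ∀ j, s j ^ 2 = ∑ i, w i * d i j)
    (i : ι) (y : κ → ℝ) :
    w i * (∑ j, a i j / s j * (s j * y j)) ^ 2 = w i * (∑ j, a i j * y j) ^ 2 := by
  rcases eq_or_ne (w i) 0 with hwi | hwi
  · simp [hwi]
  have hd : ∀ i j, 0 ≤ d i j := fun i j =>
    nonneg_of_mul_nonneg_right ((sq_nonneg _).trans (had i j)) hc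
  have ha : ∀ j, s j = 0 → a i j = 0 := fun j hsj => by
    have hwd : w i * d i j = 0 :=
      (sum_eq_zero_iff_of_nonneg fun i _ => mul_nonneg (hw i) (hd i j)).mp
        (by rw [← hs, hsj, sq, mul_zero]) i (mem_univ i)
    have hdij : d i j = 0 := (mul_eq_zero.mp hwd).resolve_left hwi
    exact pow_eq_zero_iff two_ne_zero |>.mp
      (le_antisymm (by simpa [hdij] using had i j) (sq_nonneg _))
  congr 2
  refine sum_congr rfl fun j _ => ?_
  rcases eq_or_ne (s j) 0 with hsj | hsj
  · simp [ha j hsj]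
  · field_simp

end DiagonalRescaling

theorem exists_submodule_sum_mul_sq_le {ι κ : Type*} [Fintype ι] [Fintype κ] (w : ι → ℝ)
    (a d : ι → κ → ℝ) (hw : ∀ i, 0 ≤ w i) {c : ℝ} (hc : 0 < c)
    (had : ∀ i j, a i j ^ 2 ≤ c * d i j) {k : ℝ} (hk : 0 < k) :
    ∃ U : Submodule ℝ (κ → ℝ), (1 - 1 / k) * Fintype.card κ ≤ finrank ℝ U ∧
      ∀ y ∈ U, ∑ i, w i * (∑ j, a i j * y j) ^ 2 ≤ k * c * ∑ i, w i * ∑ j, d i j * y j ^ 2 := by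
  set s : κ → ℝ := fun j => √(∑ i, w i * d i j)
  have hs : ∀ j, s j ^ 2 = ∑ i, w i * d i j := fun j =>
    Real.sq_sqrt (sum_nonneg fun i _ => mul_nonneg (hw i)
      (nonneg_of_mul_nonneg_right ((sq_nonneg _).trans (had i j)) hc))
  set u : ι → EuclideanSpace ℝ κ := fun i => WithLp.toLp 2 fun j => a i j / s j
  set S : (κ → ℝ) →ₗ[ℝ] EuclideanSpace ℝ κ := (WithLp.linearEquiv 2 ℝ (κ → ℝ)).symm.toLinearMap ∘ₗ
    LinearMap.pi fun j => s j • LinearMap.proj j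
  have hS : ∀ y j, S y j = s j * y j := fun y j => rfl
  obtain ⟨W, hdim, hW⟩ := exists_submodule_sum_mul_inner_sq_le w hw u (by positivity : 0 ≤ k * c)
  refine ⟨W.comap S, ?_, fun y hy => ?_⟩
  · have hcomap := W.finrank_add_finrank_le_finrank_comap_add S
    have htrace := sum_mul_sum_div_sq_le hw hc.le had hs
    simp only [finrank_euclideanSpace, finrank_fintype_fun_eq_card, EuclideanSpace.norm_sq_eq,
      Real.norm_eq_abs, sq_abs, u] at hdim hcomap
    have hWU : (finrank ℝ W : ℝ) ≤ finrank ℝ (W.comap S) := by exact_mod_cast (by omega)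
    have hcodim : (Fintype.card κ - finrank ℝ W) * k ≤ Fintype.card κ := by
      nlinarith [hdim.trans htrace]
    rw [one_sub_div hk.ne', div_mul_eq_mul_div, div_le_iff₀ hk]
    nlinarith
  · have hSy : ‖S y‖ ^ 2 = ∑ i, w i * ∑ j, d i j * y j ^ 2 := by
      simp only [EuclideanSpace.norm_sq_eq, hS, Real.norm_eq_abs, sq_abs, mul_pow, hs, sum_mul,
        mul_sum]
      rw [sum_comm]
      exact sum_congr rfl fun i _ => sum_congr rfl fun j _ => by ring
    have hinner : ∀ i, ⟪u i, S y⟫ = ∑ j, a i j / s j * (s j * y j) := fun i => by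
      simp only [PiLp.inner_apply, hS, u, RCLike.inner_apply, conj_trivial, mul_comm]
    calc ∑ i, w i * (∑ j, a i j * y j) ^ 2 = ∑ i, w i * ⟪u i, S y⟫ ^ 2 :=
          sum_congr rfl fun i _ => by rw [hinner, mul_sum_div_mul_sq hw hc had hs]
      _ ≤ k * c * ‖S y‖ ^ 2 := hW (S y) hy
      _ = k * c * ∑ i, w i * ∑ j, d i j * y j ^ 2 := by rw [hSy]

/-- **Lemma 17.** Let `γ > 0`, let `A ∈ ℝ^{m×n}` with `|A_{ij}| ≤ γ` for all entries, let
`x ∈ [-1,1]^n`, let `w_1, …, w_m ≥ 0` and let `k` be a positive integer. Then there is a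
subspace `U ⊆ ℝ^n` of dimension at least `(1 - 1/k) n` such that
`∑ i, w_i ⟨A_i^{∘2} ∘ x, y⟩² ≤ k γ² ∑ i, w_i ∑ j, A_{ij}² y_j²` for all `y ∈ U`,
where `(A_i^{∘2} ∘ x)_j = A_{ij}² x_j`. -/
theorem stmt_13 (m n : ℕ) (γ : ℝ) (hγ : 0 < γ)
    (A : Matrix (Fin m) (Fin n) ℝ) (hA : ∀ i j, |A i j| ≤ γ)
    (x : Fin n → ℝ) (hx : ∀ j, x j ∈ Set.Icc (-1 : ℝ) 1)
    (w : Fin m → ℝ) (hw : ∀ i, 0 ≤ w i)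
    (k : ℕ) (hk : 0 < k) :
    ∃ U : Submodule ℝ (Fin n → ℝ),
      (1 - 1 / (k : ℝ)) * (n : ℝ) ≤ (Module.finrank ℝ U : ℝ) ∧
      ∀ y ∈ U,
        ∑ i, w i * (∑ j, (A i j) ^ 2 * x j * y j) ^ 2 ≤
          (k : ℝ) * γ ^ 2 * ∑ i, w i * ∑ j, (A i j) ^ 2 * (y j) ^ 2 := by
  have hA2 : ∀ i j, A i j ^ 2 ≤ γ ^ 2 := fun i j => sq_le_sq' (abs_le.mp (hA i j)).1
    (abs_le.mp (hA i j)).2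
  have hx2 : ∀ j, x j ^ 2 ≤ 1 := fun j => (sq_le_one_iff_abs_le_one _).mpr (abs_le.mpr (hx j))
  have had : ∀ i j, (A i j ^ 2 * x j) ^ 2 ≤ γ ^ 2 * A i j ^ 2 := fun i j =>
    calc (A i j ^ 2 * x j) ^ 2 = A i j ^ 2 * (A i j ^ 2 * x j ^ 2) := by ring
      _ ≤ A i j ^ 2 * γ ^ 2 := by
        gcongr
        nlinarith [hA2 i j, hx2 j, sq_nonneg (A i j)]
      _ = γ ^ 2 * A i j ^ 2 := mul_comm _ _
  obtain ⟨U, hdim, hU⟩ := exists_submodule_sum_mul_sq_le w (fun i j => A i j ^ 2 * x j)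
    (fun i j => A i j ^ 2) hw (pow_pos hγ 2) had (Nat.cast_pos.mpr hk)
  exact ⟨U, by simpa using hdim, hU⟩
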